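/- If (1−q)ρ(A)² < 1 with q ∈ (0,1) and A ∈ ℝ^{n×n}, then for any positive definite X the Lyapunov equation Φ = (1−q) Aᵀ Φ A + q Aᵀ X A has a unique solution given by Φ = q ∑_{i=1}^∞ (1−q)^{i−1} (Aᵀ)^i X A^i, and Φ is positive semidefinite; if A is invertible then Φ is positive definite. -/

import Mathlib

/-!
Write `L Φ = (1 - q) • (Aᵀ * Φ * A)` and `Y = q • (Aᵀ * X * A)`, so that the equation reads
`Φ = L Φ + Y` and `L ^ k Φ = (1 - q) ^ k • ((Aᵀ) ^ k * Φ * A ^ k)`. By Gelfand's formula,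
`‖A ^ k‖ ≤ r ^ k` eventually for every `r > ρ(A)`; choosing `r` with `(1 - q) r² < 1` and using the
transpose-invariant Frobenius norm, `L ^ k` eventually contracts geometrically. Hence the Neumann
series `∑ L ^ k Y` converges, solves the equation, and is its only solution. Its terms are
congruences of `X`, hence positive semidefinite, and the first one, `q • Aᵀ X A`, is positive
definite when `A` is invertible.
-/

open Matrix

/-- The spectral radius of a complex square matrix. -/
noncomputable def specRad {m : Type*} [Fintype m] [DecidableEq m]
    (A : Matrix m m ℂ) : ℝ :=
  sSup ((fun z : ℂ => ‖z‖) '' spectrum ℂ A)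

open Filter Topology

namespace Module.End

variable {E : Type*} [NormedAddCommGroup E] {s : ℝ}

theorem eq_zero_of_apply_eq_self {R : Type*} [Semiring R] [Module R E] {T : Module.End R E}
    (hs₀ : 0 ≤ s) (hs : s < 1) (hT : ∀ᶠ k in atTop, ∀ x, ‖(T ^ k) x‖ ≤ s ^ k * ‖x‖) {x : E}
    (hx : T x = x) : x = 0 := by
  have hpow : ∀ k, (T ^ k) x = x := fun k => by
    induction k with
    | zero => rfl
    | succ k ih => rw [pow_succ, Module.End.mul_apply, hx, ih]
  have hlim : Tendsto (fun k => s ^ k * ‖x‖) atTop (𝓝 0) := by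
    simpa using (tendsto_pow_atTop_nhds_zero_of_lt_one hs₀ hs).mul_const ‖x‖
  exact norm_le_zero_iff.1 <| ge_of_tendsto hlim <|
    hT.mono fun k hk => by simpa only [hpow k] using hk x

variable {𝕜 : Type*} [NontriviallyNormedField 𝕜] [CompleteSpace 𝕜] [NormedSpace 𝕜 E]
  [FiniteDimensional 𝕜 E] {T : Module.End 𝕜 E}

theorem summable_pow_apply (hs₀ : 0 ≤ s) (hs : s < 1)
    (hT : ∀ᶠ k in atTop, ∀ x, ‖(T ^ k) x‖ ≤ s ^ k * ‖x‖) (y : E) :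
    Summable fun k => (T ^ k) y :=
  have : CompleteSpace E := FiniteDimensional.complete 𝕜 E
  .of_norm_bounded_eventually_nat ((summable_geometric_of_lt_one hs₀ hs).mul_right ‖y‖)
    (hT.mono fun _ hk => hk y)

theorem hasSum_pow_apply_iff (hs₀ : 0 ≤ s) (hs : s < 1)
    (hT : ∀ᶠ k in atTop, ∀ x, ‖(T ^ k) x‖ ≤ s ^ k * ‖x‖) {x y : E} :
    HasSum (fun k => (T ^ k) y) x ↔ x = T x + y := by
  have fixed : ∀ {x}, HasSum (fun k => (T ^ k) y) x → x = T x + y := fun {x} h => by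
    have hTx : HasSum (fun k => (T ^ (k + 1)) y) (T x) := by
      simpa only [Function.comp_def, pow_succ', Module.End.mul_apply] using
        h.map T (LinearMap.continuous_of_finiteDimensional T)
    have := (hasSum_nat_add_iff' 1).2 h
    simp only [Finset.range_one, Finset.sum_singleton, pow_zero, Module.End.one_apply] at this
    rw [← this.unique hTx]
    abel
  refine ⟨fixed, fun hx => ?_⟩
  have hS := (summable_pow_apply hs₀ hs hT y).hasSum
  have hD : T (x - ∑' k, (T ^ k) y) = x - ∑' k, (T ^ k) y := by
    rw [map_sub]
    conv_rhs => rw [hx, fixed hS]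
    abel
  rwa [sub_eq_zero.1 (eq_zero_of_apply_eq_self hs₀ hs hT hD)]

end Module.End

section Lyapunov

variable {m R : Type*} [Fintype m] [CommSemiring R]

def lyapunovMap (c : R) (A : Matrix m m R) : Module.End R (Matrix m m R) :=
  c • (LinearMap.mulLeft R Aᵀ ∘ₗ LinearMap.mulRight R A)

theorem lyapunovMap_apply (c : R) (A Φ : Matrix m m R) :
    lyapunovMap c A Φ = c • (Aᵀ * Φ * A) := by
  simp [lyapunovMap, Matrix.mul_assoc]

variable [DecidableEq m]

theorem lyapunovMap_pow_apply (c : R) (A Φ : Matrix m m R) (k : ℕ) :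
    (lyapunovMap c A ^ k) Φ = c ^ k • (Aᵀ ^ k * Φ * A ^ k) := by
  induction k with
  | zero => simp
  | succ k ih =>
    rw [pow_succ', Module.End.mul_apply, ih, lyapunovMap_apply, mul_smul_comm, smul_mul_assoc,
      smul_smul, ← pow_succ', pow_succ' Aᵀ, pow_succ A]
    simp only [Matrix.mul_assoc]

end Lyapunov

theorem specRad_nonneg {m : Type*} [Fintype m] [DecidableEq m] (B : Matrix m m ℂ) :
    0 ≤ specRad B :=
  Real.sSup_nonneg <| Set.forall_mem_image.2 fun z _ => norm_nonneg z

theorem spectralRadius_le_ofReal_specRad {m : Type*} [Fintype m] [DecidableEq m]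
    (B : Matrix m m ℂ) : spectralRadius ℂ B ≤ ENNReal.ofReal (specRad B) :=
  iSup₂_le fun z hz => by
    rw [← ENNReal.ofReal_coe_nnreal, coe_nnnorm]
    exact ENNReal.ofReal_le_ofReal <|
      le_csSup (B.finite_spectrum.image _).bddAbove ⟨z, hz, rfl⟩

theorem spectrum.eventually_norm_pow_le_of_spectralRadius_lt {A : Type*} [NormedRing A]
    [NormedAlgebra ℂ A] [CompleteSpace A] {a : A} {r : ℝ}
    (h : spectralRadius ℂ a < ENNReal.ofReal r) : ∀ᶠ k in atTop, ‖a ^ k‖ ≤ r ^ k := by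
  filter_upwards [(pow_norm_pow_one_div_tendsto_nhds_spectralRadius a).eventually_lt_const h,
    eventually_ne_atTop 0] with k hk hk₀
  rw [ENNReal.ofReal_lt_ofReal_iff', one_div] at hk
  calc ‖a ^ k‖ = (‖a ^ k‖ ^ (k : ℝ)⁻¹) ^ k := (Real.rpow_inv_natCast_pow (norm_nonneg _) hk₀).symm
    _ ≤ r ^ k := pow_le_pow_left₀ (by positivity) hk.1.le k

section Frobenius

open scoped Norms.Frobenius

variable {m : Type*} [Fintype m] [DecidableEq m]

theorem norm_lyapunovMap_pow_apply_le {c r : ℝ} (hc : 0 ≤ c) {A : Matrix m m ℝ} {k : ℕ}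
    (hA : ‖A ^ k‖ ≤ r ^ k) (Φ : Matrix m m ℝ) :
    ‖(lyapunovMap c A ^ k) Φ‖ ≤ (c * r ^ 2) ^ k * ‖Φ‖ :=
  have hr : 0 ≤ r ^ k := (norm_nonneg _).trans hA
  calc ‖(lyapunovMap c A ^ k) Φ‖ = c ^ k * ‖(A ^ k)ᵀ * Φ * A ^ k‖ := by
        rw [lyapunovMap_pow_apply, norm_smul, Real.norm_of_nonneg (by positivity), transpose_pow]
    _ ≤ c ^ k * (‖(A ^ k)ᵀ‖ * ‖Φ‖ * ‖A ^ k‖) := by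
        gcongr
        exact (norm_mul_le _ _).trans (by gcongr; exact norm_mul_le _ _)
    _ ≤ c ^ k * (r ^ k * ‖Φ‖ * r ^ k) := by
        rw [frobenius_norm_transpose]
        gcongr
    _ = (c * r ^ 2) ^ k * ‖Φ‖ := by ring

theorem Matrix.eventually_norm_pow_le_of_specRad_lt {A : Matrix m m ℝ} {r : ℝ}
    (hr : specRad (A.map Complex.ofReal) < r) : ∀ᶠ k in atTop, ‖A ^ k‖ ≤ r ^ k := by
  have h := spectrum.eventually_norm_pow_le_of_spectralRadius_lt (a := A.map Complex.ofReal) <|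
    (spectralRadius_le_ofReal_specRad _).trans_lt
      ((ENNReal.ofReal_lt_ofReal_iff_of_nonneg (specRad_nonneg _)).2 hr)
  filter_upwards [h] with k hk
  calc ‖A ^ k‖ = ‖(A ^ k).map Complex.ofReal‖ := (frobenius_norm_map_eq _ _ Complex.norm_real).symm
    _ = ‖A.map Complex.ofReal ^ k‖ := congrArg norm (A.map_pow Complex.ofRealHom k)
    _ ≤ r ^ k := hk

theorem exists_eventually_norm_lyapunovMap_pow_le {c : ℝ} (hc : 0 ≤ c) {A : Matrix m m ℝ}
    (hρ : c * specRad (A.map Complex.ofReal) ^ 2 < 1) :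
    ∃ s, 0 ≤ s ∧ s < 1 ∧ ∀ᶠ k in atTop, ∀ Φ, ‖(lyapunovMap c A ^ k) Φ‖ ≤ s ^ k * ‖Φ‖ := by
  obtain ⟨r, hρr, hr⟩ : ∃ r, specRad (A.map Complex.ofReal) < r ∧ c * r ^ 2 < 1 :=
    (((continuous_const.mul (continuous_pow 2)).tendsto _).eventually (gt_mem_nhds hρ)).exists_gt
  exact ⟨c * r ^ 2, by positivity, hr, (A.eventually_norm_pow_le_of_specRad_lt hρr).mono
    fun k hk => norm_lyapunovMap_pow_apply_le hc hk⟩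

theorem summable_lyapunovMap_pow_apply {c : ℝ} (hc : 0 ≤ c) {A : Matrix m m ℝ}
    (hρ : c * specRad (A.map Complex.ofReal) ^ 2 < 1) (Y : Matrix m m ℝ) :
    Summable fun k => (lyapunovMap c A ^ k) Y :=
  have ⟨_, hs₀, hs, hT⟩ := exists_eventually_norm_lyapunovMap_pow_le hc hρ
  Module.End.summable_pow_apply hs₀ hs hT Y

theorem hasSum_lyapunovMap_pow_apply_iff {c : ℝ} (hc : 0 ≤ c) {A : Matrix m m ℝ}
    (hρ : c * specRad (A.map Complex.ofReal) ^ 2 < 1) {Φ Y : Matrix m m ℝ} :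
    HasSum (fun k => (lyapunovMap c A ^ k) Y) Φ ↔ Φ = c • (Aᵀ * Φ * A) + Y := by
  obtain ⟨_, hs₀, hs, hT⟩ := exists_eventually_norm_lyapunovMap_pow_le hc hρ
  exact (Module.End.hasSum_pow_apply_iff hs₀ hs hT).trans (by rw [lyapunovMap_apply])

end Frobenius

namespace Matrix

open scoped ComplexOrder

variable {n 𝕜 : Type*} [Fintype n] [RCLike 𝕜]

theorem isClosed_setOf_posSemidef : IsClosed {A : Matrix n n 𝕜 | A.PosSemidef} := by
  simp only [posSemidef_iff_dotProduct_mulVec, Set.ofPred_and, Set.ofPred_forall]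
  exact (isClosed_eq continuous_id.matrix_conjTranspose continuous_id).inter <|
    isClosed_iInter fun x => isClosed_le continuous_const <|
      continuous_const.dotProduct (continuous_id.matrix_mulVec continuous_const)

theorem PosSemidef.of_hasSum {ι : Type*} {f : ι → Matrix n n 𝕜} {A : Matrix n n 𝕜}
    (hf : ∀ i, (f i).PosSemidef) (h : HasSum f A) : A.PosSemidef :=
  isClosed_setOf_posSemidef.mem_of_tendsto h <|
    Eventually.of_forall fun s => posSemidef_sum s fun i _ => hf i

theorem PosDef.of_hasSum {ι : Type*} {f : ι → Matrix n n 𝕜} {A : Matrix n n 𝕜}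
    (hf : ∀ i, (f i).PosSemidef) {i : ι} (hi : (f i).PosDef) (h : HasSum f A) : A.PosDef := by
  classical
  have hrest : (A - f i).PosSemidef := by
    refine PosSemidef.of_hasSum (f := Function.update f i 0) (fun j => ?_)
      (by simpa [neg_add_eq_sub] using h.update i 0)
    rcases eq_or_ne j i with rfl | hj
    · simpa using PosSemidef.zero
    · simpa [hj] using hf j
  simpa using hi.add_posSemidef hrest

end Matrix

/-- If `(1−q) ρ(A)² < 1`, the Lyapunov equation
`Φ = (1−q) Aᵀ Φ A + q Aᵀ X A` has a unique solution, given by the convergent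
series `Φ = q ∑_{i≥1} (1−q)^{i−1} (Aᵀ)^i X A^i`; it is positive semidefinite,
and positive definite if `A` is invertible. -/
theorem lyapunov_unique_solution {n : ℕ} (A : Matrix (Fin n) (Fin n) ℝ)
    (q : ℝ) (hq : q ∈ Set.Ioo (0 : ℝ) 1)
    (hρ : (1 - q) * specRad (A.map Complex.ofReal) ^ 2 < 1)
    (X : Matrix (Fin n) (Fin n) ℝ) (hX : X.PosDef) :
    (∃! Φ : Matrix (Fin n) (Fin n) ℝ,
        Φ = (1 - q) • (Aᵀ * Φ * A) + q • (Aᵀ * X * A)) ∧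
      ∀ Φ : Matrix (Fin n) (Fin n) ℝ,
        Φ = (1 - q) • (Aᵀ * Φ * A) + q • (Aᵀ * X * A) →
          (HasSum (fun i : ℕ => (q * (1 - q) ^ i) • ((Aᵀ) ^ (i + 1) * X * A ^ (i + 1))) Φ ∧
            Φ.PosSemidef ∧ (IsUnit A.det → Φ.PosDef)) := by
  obtain ⟨hq₀, hq₁⟩ := hq
  have hc : 0 ≤ 1 - q := by linarith
  have hpow : ∀ k, Aᵀ ^ k = (A ^ k)ᴴ := fun k => by
    rw [conjTranspose_eq_transpose_of_trivial, transpose_pow]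
  have hterm : ∀ k, (lyapunovMap (1 - q) A ^ k) (q • (Aᵀ * X * A))
      = (q * (1 - q) ^ k) • (Aᵀ ^ (k + 1) * X * A ^ (k + 1)) := fun k => by
    rw [lyapunovMap_pow_apply, mul_smul_comm, smul_mul_assoc, smul_smul, mul_comm, pow_succ Aᵀ,
      pow_succ' A]
    simp only [Matrix.mul_assoc]
  have hpsd : ∀ k, ((q * (1 - q) ^ k) • (Aᵀ ^ (k + 1) * X * A ^ (k + 1))).PosSemidef := fun k => by
    rw [hpow]
    exact (hX.posSemidef.conjTranspose_mul_mul_same _).smul (by positivity)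
  have hsum := (summable_lyapunovMap_pow_apply hc hρ (q • (Aᵀ * X * A))).hasSum
  refine ⟨⟨_, hasSum_lyapunovMap_pow_apply_iff hc hρ |>.1 hsum,
    fun Φ hΦ => (hasSum_lyapunovMap_pow_apply_iff hc hρ |>.2 hΦ).unique hsum⟩, fun Φ hΦ => ?_⟩
  have hΦsum := hasSum_lyapunovMap_pow_apply_iff hc hρ |>.2 hΦ
  simp only [hterm] at hΦsum
  refine ⟨hΦsum, .of_hasSum hpsd hΦsum, fun hA => .of_hasSum hpsd (i := 0) ?_ hΦsum⟩
  rw [hpow]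
  refine (hX.conjTranspose_mul_mul_same ?_).smul (by positivity)
  exact mulVec_injective_iff_isUnit.2 ((isUnit_iff_isUnit_det _).2 (by simpa using hA))
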